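/- arXiv:2204.03365 — 4 statements merged into one kernel-verified Lean document; each statement's English description precedes it below -/
import Mathlib

section
/- (a) For all (n,i), (m,j) ∈ S with (n,i) < (m,j) in the lexicographic order, v(s_{n,i} − s_{m,j}) = δ(n,i). (b) For all (n,i) ∈ S, v(s − s_{n,i}) = δ(n,i). (c) Consequently, for all (n,i), (m,j) ∈ S, ω_{s_{n,i},δ(n,i)}(x − s_{m,j}) = min(δ(n,i), δ(m,j)). -/
/-!
Common setup: `p` a prime, `F` an algebraic closure of `𝔽_p`, `H = F((t^ℚ))` the Hahn series
field with its canonical additive valuation `v` (minimum of the support), the Newton–Puiseux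
subfield `K ⊆ H`, the elements `s_n`, the series `s = ∑ tⁿ·s_n`, the truncations `s_{n,i}`,
the rationals `δ(n,i) = n - 1/p^(i+1)`, and the depth-zero valuations `ω_{a,δ}`.
-/

open Polynomial HahnSeries

variable (p : ℕ) [Fact p.Prime]

/-- `F`, an algebraic closure of `𝔽_p`. -/
abbrev Fbar : Type := AlgebraicClosure (ZMod p)

/-- The Hahn series field `H = F((t^ℚ))`. -/
abbrev H : Type := HahnSeries ℚ (Fbar p)

/-- The additive valuation `v(f) = min (supp f)`, with `v 0 = ∞`. -/
noncomputable def v (f : H p) : WithTop ℚ := f.orderTop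

/-- The exponent `-1/p^(j+1)`. -/
def expo (j : ℕ) : ℚ := -((p : ℚ) ^ (j + 1))⁻¹

lemma one_lt_p : (1 : ℚ) < p := by
  exact_mod_cast (Fact.out : p.Prime).one_lt

lemma expo_mono : Monotone (expo p) := by
  intro j k hjk
  have hp : (1 : ℚ) < p := one_lt_p p
  have h1 : (0 : ℚ) < (p : ℚ) ^ (j + 1) := pow_pos (lt_trans one_pos hp) _
  have h2 : (p : ℚ) ^ (j + 1) ≤ (p : ℚ) ^ (k + 1) :=
    pow_le_pow_right₀ (le_of_lt hp) (by omega)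
  have := inv_anti₀ h1 h2
  simp only [expo, neg_le_neg_iff]
  linarith

lemma isPWO_univ_nat : (Set.univ : Set ℕ).IsPWO :=
  (Set.isWF_univ_iff.2 ⟨wellFounded_lt⟩).isPWO

-- `s_n = ∑_{j ≥ n} C(j,n)·t^(-1/p^(j+1))`, where `C(j,n)` is `j.choose n` reduced mod `p`.
open Classical in
noncomputable def sn (n : ℕ) : H p where
  coeff q := if h : ∃ j : ℕ, n ≤ j ∧ q = expo p j then (Nat.choose h.choose n : Fbar p) else 0
  isPWO_support' := by
    apply ((isPWO_univ_nat.image_of_monotone (expo_mono p)).mono)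
    intro q hq
    simp only [Function.mem_support] at hq
    have h : ∃ j : ℕ, n ≤ j ∧ q = expo p j := by
      by_contra h
      rw [dif_neg h] at hq
      exact hq rfl
    obtain ⟨j, _, rfl⟩ := h
    exact ⟨j, Set.mem_univ j, rfl⟩

-- `s = ∑_{n ≥ 0} tⁿ·s_n`, i.e. the series with coefficient `C(j,n)` at `n - 1/p^(j+1)`.
open Classical in
noncomputable def sH : H p where
  coeff q := if h : ∃ nj : ℕ × ℕ, nj.1 ≤ nj.2 ∧ q = (nj.1 : ℚ) + expo p nj.2 then
      (Nat.choose h.choose.2 h.choose.1 : Fbar p) else 0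
  isPWO_support' := by
    have hmono : Monotone (fun nj : ℕ × ℕ => (nj.1 : ℚ) + expo p nj.2) := by
      intro a b hab
      exact add_le_add (by exact_mod_cast hab.1) (expo_mono p hab.2)
    apply ((isPWO_univ_nat.prod isPWO_univ_nat).image_of_monotone hmono).mono
    intro q hq
    simp only [Function.mem_support] at hq
    have h : ∃ nj : ℕ × ℕ, nj.1 ≤ nj.2 ∧ q = (nj.1 : ℚ) + expo p nj.2 := by
      by_contra h
      rw [dif_neg h] at hq
      exact hq rfl
    obtain ⟨nj, _, rfl⟩ := h
    exact ⟨nj, by simp [Set.mem_prod], rfl⟩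

/-- The additive map `ℤ →+ ℚ`, `k ↦ k/N`. -/
def embQ (N : ℕ) : ℤ →+ ℚ where
  toFun k := (k : ℚ) / (N : ℚ)
  map_zero' := by simp
  map_add' := by intros; push_cast; ring

lemma embQ_inj {N : ℕ} (hN : 0 < N) : Function.Injective (embQ N) := by
  intro a b hab
  have hN' : (0 : ℚ) < N := by exact_mod_cast hN
  simpa [embQ, div_eq_div_iff hN'.ne' hN'.ne', hN'.ne'] using hab

lemma embQ_mono {N : ℕ} (hN : 0 < N) : ∀ g g' : ℤ, embQ N g ≤ embQ N g' ↔ g ≤ g' := by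
  intro g g'
  have hN' : (0 : ℚ) < N := by exact_mod_cast hN
  simp [embQ, div_le_div_iff_of_pos_right hN', Int.cast_le]

lemma embQ_strictMono {N : ℕ} (hN : 0 < N) : StrictMono (embQ N) := by
  have := embQ_mono hN
  exact strictMono_of_le_iff_le fun a b => (this a b).symm

/-- Laurent series (Hahn series over `ℤ`) mapped into `H p` via `k ↦ k/N`. -/
noncomputable def laurentInc (N : ℕ) (hN : 0 < N) : HahnSeries ℤ (Fbar p) →+* H p :=
  HahnSeries.embDomainRingHom (embQ N) (embQ_inj hN) (embQ_mono hN)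

lemma mem_range_laurentInc_iff {N : ℕ} (hN : 0 < N) (f : H p) :
    (∃ g, laurentInc p N hN g = f) ↔ ∀ q ∈ f.support, ∃ k : ℤ, q = (k : ℚ) / N := by
  constructor
  · rintro ⟨g, rfl⟩ q hq
    obtain ⟨k, -, rfl⟩ := HahnSeries.support_embDomain_subset hq
    exact ⟨k, rfl⟩
  · intro hf
    classical
    have hpwo : (Function.support fun k : ℤ => f.coeff (embQ N k)).IsPWO := by
      apply Set.IsWF.isPWO
      rw [Set.isWF_iff_no_descending_seq]
      intro φ hφ hmem
      apply Set.isWF_iff_no_descending_seq.mp f.isWF_support (fun n => embQ N (φ n))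
        ((embQ_strictMono hN).comp_strictAnti hφ)
      intro n
      exact hmem n
    refine ⟨⟨fun k => f.coeff (embQ N k), hpwo⟩, ?_⟩
    apply HahnSeries.ext
    funext q
    by_cases hq : q ∈ Set.range (embQ N)
    · obtain ⟨k, rfl⟩ := hq
      exact HahnSeries.embDomain_mk_coeff (embQ_inj hN) (embQ_mono hN)
    · rw [show (laurentInc p N hN ⟨fun k => f.coeff (embQ N k), hpwo⟩).coeff q = 0 from
        HahnSeries.embDomain_notin_range hq]
      by_contra hne
      obtain ⟨k, hk⟩ := hf q (by simpa [HahnSeries.mem_support] using Ne.symm hne)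
      exact hq ⟨k, hk.symm⟩

/-- The Newton–Puiseux field `K`: Hahn series whose support lies in `(1/N)·ℤ` for some `N > 0`. -/
noncomputable def KNP : Subfield (H p) where
  carrier := {f : H p | ∃ N : ℕ, 0 < N ∧ ∀ q ∈ f.support, ∃ k : ℤ, q = (k : ℚ) / N}
  zero_mem' := ⟨1, one_pos, by simp⟩
  one_mem' := by
    refine ⟨1, one_pos, fun q hq => ?_⟩
    rw [HahnSeries.support_one] at hq
    exact ⟨0, by simp [Set.mem_singleton_iff.mp hq]⟩
  add_mem' := by
    rintro x y ⟨N, hN, hx⟩ ⟨M, hM, hy⟩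
    refine ⟨N * M, Nat.mul_pos hN hM, fun q hq => ?_⟩
    rcases HahnSeries.support_add_subset _ _ hq with h | h
    · obtain ⟨k, rfl⟩ := hx q h
      refine ⟨k * M, ?_⟩
      have hM' : (M : ℚ) ≠ 0 := by exact_mod_cast hM.ne'
      have hN' : (N : ℚ) ≠ 0 := by exact_mod_cast hN.ne'
      push_cast
      field_simp
    · obtain ⟨k, rfl⟩ := hy q h
      refine ⟨k * N, ?_⟩
      have hM' : (M : ℚ) ≠ 0 := by exact_mod_cast hM.ne'
      have hN' : (N : ℚ) ≠ 0 := by exact_mod_cast hN.ne'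
      push_cast
      field_simp
  neg_mem' := by
    rintro x ⟨N, hN, hx⟩
    exact ⟨N, hN, fun q hq => hx q (by rwa [HahnSeries.support_neg] at hq)⟩
  mul_mem' := by
    rintro x y ⟨N, hN, hx⟩ ⟨M, hM, hy⟩
    refine ⟨N * M, Nat.mul_pos hN hM, fun q hq => ?_⟩
    obtain ⟨q₁, hq₁, q₂, hq₂, rfl⟩ := HahnSeries.support_mul_subset hq
    obtain ⟨k₁, rfl⟩ := hx q₁ hq₁
    obtain ⟨k₂, rfl⟩ := hy q₂ hq₂
    refine ⟨k₁ * M + k₂ * N, ?_⟩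
    have hM' : (M : ℚ) ≠ 0 := by exact_mod_cast hM.ne'
    have hN' : (N : ℚ) ≠ 0 := by exact_mod_cast hN.ne'
    push_cast
    field_simp
  inv_mem' := by
    rintro x ⟨N, hN, hx⟩
    obtain ⟨g, rfl⟩ := (mem_range_laurentInc_iff p hN x).mpr hx
    rw [← map_inv₀]
    exact ⟨N, hN, ((mem_range_laurentInc_iff p hN _).mp ⟨g⁻¹, rfl⟩)⟩

/-- The truncation `s_{n,i} = ∑_{m<n} tᵐ·s_m + tⁿ·∑_{n ≤ j < i} C(j,n)·t^(-1/p^(j+1))`. -/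
noncomputable def strunc (n i : ℕ) : H p :=
  (∑ m ∈ Finset.range n, HahnSeries.single (m : ℚ) 1 * sn p m)
  + HahnSeries.single (n : ℚ) 1 *
      (∑ j ∈ Finset.Ico n i, HahnSeries.single (expo p j) ((Nat.choose j n : Fbar p)))

/-- `δ(n,i) = n - 1/p^(i+1)`. -/
def dlt (n i : ℕ) : ℚ := (n : ℚ) - ((p : ℚ) ^ (i + 1))⁻¹

/-- The depth-zero valuation `ω_{a,δ}(f) = min_ℓ (v(a_ℓ) + ℓ·δ)`, where
`f = ∑_ℓ a_ℓ·(x-a)^ℓ` is the Taylor expansion of `f` at `a`. -/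
noncomputable def om (a : H p) (δ : ℚ) (f : Polynomial (H p)) : WithTop ℚ :=
  (Finset.range (f.natDegree + 1)).inf
    fun ℓ => v p ((Polynomial.taylor a f).coeff ℓ) + (((ℓ : ℚ) * δ : ℚ) : WithTop ℚ)

-- The degree `[K(b) : K]` of an element `b ∈ H` over the Newton–Puiseux field `K`.
set_option synthInstance.maxHeartbeats 1000000 in
noncomputable def degK (b : H p) : ℕ :=
  Module.finrank (KNP p) (IntermediateField.adjoin (KNP p) {b})

lemma tinv_mem : HahnSeries.single (-1 : ℚ) (1 : Fbar p) ∈ KNP p := by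
  refine ⟨1, one_pos, fun q hq => ?_⟩
  have := HahnSeries.support_single_subset hq
  exact ⟨-1, by simp [Set.mem_singleton_iff.mp this]⟩

/-- `t^(-1) = single (-1) 1` as an element of `K`. -/
noncomputable def tinv : KNP p := ⟨HahnSeries.single (-1 : ℚ) (1 : Fbar p), tinv_mem p⟩

/-!
Since `-1/p^(b+1) ∈ (-1, 0)`, the exponents `a - 1/p^(b+1)` are strictly increasing in `(a, b)`
for the lexicographic order. Comparing coefficients, `s_{n,i}` is therefore exactly the
truncation of `s` strictly below `δ(n,i)`, while the coefficient of `s` at `δ(n,i)` is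
`C(i,n) ≠ 0`. So `s - s_{n,i}`, and `s_{n,i} - s_{m,j}` when `δ(n,i) < δ(m,j)`, have their first
nonzero coefficient at `δ(n,i)`; (c) follows since `ω_{a,δ}(x - b) = min(v(a - b), δ)`.
-/

namespace HahnSeries

variable {Γ R : Type*} [LinearOrder Γ]

theorem orderTop_eq_of_coeff_ne_zero [Zero R] {x : R⟦Γ⟧} {c : Γ} (hc : x.coeff c ≠ 0)
    (hlt : ∀ j < c, x.coeff j = 0) : x.orderTop = c :=
  le_antisymm (orderTop_le_of_coeff_ne_zero hc) (le_orderTop_iff_forall.2 fun j hj =>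
    hlt j (WithTop.coe_lt_coe.1 hj))

theorem orderTop_sub_truncLT [AddGroup R] {x : R⟦Γ⟧} {c : Γ} (hc : x.coeff c ≠ 0) :
    (x - truncLT c x).orderTop = c :=
  orderTop_eq_of_coeff_ne_zero (by simpa using hc) fun j hj => by simp [hj]

theorem orderTop_truncLT_sub_truncLT [AddGroup R] {x : R⟦Γ⟧} {c d : Γ} (hcd : c < d)
    (hc : x.coeff c ≠ 0) :
    (truncLT c x - truncLT d x).orderTop = c :=
  orderTop_eq_of_coeff_ne_zero (by simpa [hcd] using hc) fun j hj => by
    simp [hj, hj.trans hcd]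

end HahnSeries

theorem expo_neg (j : ℕ) : expo p j < 0 :=
  neg_neg_of_pos (inv_pos.2 (pow_pos (zero_lt_one.trans (one_lt_p p)) _))

theorem neg_one_lt_expo (j : ℕ) : -1 < expo p j :=
  neg_lt_neg (inv_lt_one_of_one_lt₀ (one_lt_pow₀ (one_lt_p p) j.succ_ne_zero))

theorem expo_strictMono : StrictMono (expo p) := fun _ _ hij =>
  neg_lt_neg (inv_strictAnti₀ (pow_pos (zero_lt_one.trans (one_lt_p p)) _)
    (pow_lt_pow_right₀ (one_lt_p p) (Nat.succ_lt_succ hij)))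

omit [Fact p.Prime] in
theorem dlt_eq_add_expo (n i : ℕ) : dlt p n i = n + expo p i := by
  rw [dlt, expo, sub_eq_add_neg]

theorem add_expo_lt_add_expo_iff {a b c d : ℕ} :
    (a : ℚ) + expo p b < c + expo p d ↔ a < c ∨ a = c ∧ b < d := by
  have hb₁ := neg_one_lt_expo p b
  have hb₂ := expo_neg p b
  have hd₁ := neg_one_lt_expo p d
  have hd₂ := expo_neg p d
  constructor
  · intro h
    rcases lt_trichotomy a c with hac | rfl | hca
    · exact Or.inl hac
    · exact Or.inr ⟨rfl, (expo_strictMono p).lt_iff_lt.1 (by linarith)⟩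
    · have : (c : ℚ) + 1 ≤ a := by exact_mod_cast hca
      linarith
  · rintro (hac | ⟨rfl, hbd⟩)
    · have : (a : ℚ) + 1 ≤ c := by exact_mod_cast hac
      linarith
    · exact add_lt_add_right (expo_strictMono p hbd) _

theorem add_expo_injective {a b c d : ℕ} (h : (a : ℚ) + expo p b = c + expo p d) :
    a = c ∧ b = d := by
  have h₁ := mt (add_expo_lt_add_expo_iff p).2 h.not_lt
  have h₂ := mt (add_expo_lt_add_expo_iff p).2 h.not_gt
  omega

theorem add_expo_sub_eq_expo_iff {a b m j : ℕ} :
    (a : ℚ) + expo p b - m = expo p j ↔ a = m ∧ b = j := by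
  constructor
  · intro h
    exact add_expo_injective p (by linarith)
  · rintro ⟨rfl, rfl⟩
    ring

theorem sn_coeff_expo (n j : ℕ) : (sn p n).coeff (expo p j) = (j.choose n : Fbar p) := by
  classical
  dsimp only [sn]
  split_ifs with h
  · rw [show h.choose = j from ((expo_strictMono p).injective h.choose_spec.2).symm]
  · push Not at h
    rw [Nat.choose_eq_zero_of_lt (not_le.1 fun hnj => h j hnj rfl), Nat.cast_zero]

theorem sn_coeff_of_forall_ne {n : ℕ} {q : ℚ} (hq : ∀ j, q ≠ expo p j) :
    (sn p n).coeff q = 0 := by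
  classical
  dsimp only [sn]
  rw [dif_neg]
  rintro ⟨j, -, rfl⟩
  exact hq j rfl

theorem sH_coeff_add_expo (a b : ℕ) : (sH p).coeff (a + expo p b) = (b.choose a : Fbar p) := by
  classical
  dsimp only [sH]
  split_ifs with h
  · obtain ⟨ha, hb⟩ := add_expo_injective p h.choose_spec.2
    rw [← ha, ← hb]
  · push Not at h
    rw [Nat.choose_eq_zero_of_lt (not_le.1 fun hab => h (a, b) hab rfl), Nat.cast_zero]

theorem sH_coeff_of_forall_ne {q : ℚ} (hq : ∀ a b : ℕ, q ≠ a + expo p b) :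
    (sH p).coeff q = 0 := by
  classical
  dsimp only [sH]
  rw [dif_neg]
  rintro ⟨⟨a, b⟩, -, rfl⟩
  exact hq a b rfl

theorem sH_coeff_dlt_ne_zero {n i : ℕ} (h : ¬ p ∣ i.choose n) :
    (sH p).coeff (dlt p n i) ≠ 0 := by
  rw [dlt_eq_add_expo, sH_coeff_add_expo, ne_eq, CharP.cast_eq_zero_iff (Fbar p) p]
  exact h

theorem strunc_coeff (n i : ℕ) (q : ℚ) :
    (strunc p n i).coeff q = ∑ m ∈ Finset.range n, (sn p m).coeff (q - m) +
      ∑ j ∈ Finset.Ico n i, (single (expo p j) (j.choose n : Fbar p)).coeff (q - n) := by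
  simp only [strunc, HahnSeries.coeff_add, HahnSeries.coeff_sum, coeff_single_mul, one_mul]

theorem strunc_coeff_add_expo (n i a b : ℕ) :
    (strunc p n i).coeff (a + expo p b) =
      if a < n ∨ a = n ∧ b < i then (b.choose a : Fbar p) else 0 := by
  have hsn (m : ℕ) :
      (sn p m).coeff (a + expo p b - m) = if a = m then (b.choose m : Fbar p) else 0 := by
    split_ifs with ham
    · rw [ham, add_sub_cancel_left, sn_coeff_expo]
    · exact sn_coeff_of_forall_ne p fun j hj => ham ((add_expo_sub_eq_expo_iff p).1 hj).1
  have hsingle (j : ℕ) : (single (expo p j) (j.choose n : Fbar p)).coeff (a + expo p b - n) =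
      if a = n ∧ b = j then (j.choose n : Fbar p) else 0 := by
    simp only [coeff_single, add_expo_sub_eq_expo_iff]
  simp_rw [strunc_coeff, hsn, hsingle, Finset.sum_ite_eq, Finset.mem_range]
  rcases lt_trichotomy a n with han | rfl | han
  · simp [han, han.ne]
  · by_cases hab : a ≤ b
    · simp [hab]
    · simp [hab, Nat.choose_eq_zero_of_lt (not_le.1 hab)]
  · simp [han.not_gt, han.ne']

theorem strunc_eq_truncLT (n i : ℕ) : strunc p n i = truncLT (dlt p n i) (sH p) := by
  ext q
  rw [HahnSeries.coeff_truncLT]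
  by_cases hq : ∃ a b : ℕ, q = a + expo p b
  · obtain ⟨a, b, rfl⟩ := hq
    rw [strunc_coeff_add_expo, sH_coeff_add_expo, dlt_eq_add_expo]
    exact if_congr (add_expo_lt_add_expo_iff p).symm rfl rfl
  · push Not at hq
    rw [sH_coeff_of_forall_ne p hq, ite_self, strunc_coeff, Finset.sum_eq_zero, Finset.sum_eq_zero,
      add_zero]
    · exact fun j _ => coeff_single_of_ne fun h => hq n j (by linarith)
    · exact fun m _ => sn_coeff_of_forall_ne p fun j h => hq m j (by linarith)

theorem om_X_sub_C (a b : H p) (δ : ℚ) :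
    om p a δ (X - Polynomial.C b) = min (v p (a - b)) δ := by
  simp [om, Finset.range_add_one, v, min_comm]

/-- (a) for `(n,i) < (m,j)` in `S` (lexicographically),
`v(s_{n,i} - s_{m,j}) = δ(n,i)`; (b) `v(s - s_{n,i}) = δ(n,i)`;
(c) `ω_{s_{n,i},δ(n,i)}(x - s_{m,j}) = min(δ(n,i), δ(m,j))`. -/
theorem strunc_valuation_facts :
    (∀ n i m j : ℕ, n ≤ i → ¬ p ∣ Nat.choose i n → m ≤ j → ¬ p ∣ Nat.choose j m →
      (n < m ∨ (n = m ∧ i < j)) →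
      v p (strunc p n i - strunc p m j) = ((dlt p n i : ℚ) : WithTop ℚ))
    ∧ (∀ n i : ℕ, n ≤ i → ¬ p ∣ Nat.choose i n →
      v p (sH p - strunc p n i) = ((dlt p n i : ℚ) : WithTop ℚ))
    ∧ (∀ n i m j : ℕ, n ≤ i → ¬ p ∣ Nat.choose i n → m ≤ j → ¬ p ∣ Nat.choose j m →
      om p (strunc p n i) (dlt p n i) (X - Polynomial.C (strunc p m j))
        = ((min (dlt p n i) (dlt p m j) : ℚ) : WithTop ℚ)) := by
  refine ⟨fun n i m j _ hi _ _ hlt => ?_, fun n i _ hi => ?_, fun n i m j _ hi _ hj => ?_⟩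
  · have hδ : dlt p n i < dlt p m j := by
      rwa [dlt_eq_add_expo, dlt_eq_add_expo, add_expo_lt_add_expo_iff]
    rw [v, strunc_eq_truncLT, strunc_eq_truncLT,
      orderTop_truncLT_sub_truncLT hδ (sH_coeff_dlt_ne_zero p hi)]
  · rw [v, strunc_eq_truncLT, orderTop_sub_truncLT (sH_coeff_dlt_ne_zero p hi)]
  · rw [om_X_sub_C, v, strunc_eq_truncLT, strunc_eq_truncLT, WithTop.coe_min]
    rcases lt_trichotomy (dlt p n i) (dlt p m j) with hδ | hδ | hδ
    · rw [orderTop_truncLT_sub_truncLT hδ (sH_coeff_dlt_ne_zero p hi), min_self,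
        min_eq_left (WithTop.coe_le_coe.2 hδ.le)]
    · rw [hδ, sub_self, orderTop_zero, min_eq_right le_top, min_self]
    · rw [← neg_sub, orderTop_neg, orderTop_truncLT_sub_truncLT hδ (sH_coeff_dlt_ne_zero p hj),
        min_comm]
end

section
/- Let A be a linearly ordered set with no maximal element and, for each i ∈ A, let ρ_i : K[x] → Δ ∪ {∞} be a valuation extending v (i.e., ρ_i restricted to K equals v) with ρ_i(f) = ∞ only for f = 0, such that for i < j one has ρ_i(f) ≤ ρ_j(f) for all f ∈ K[x] and ρ_i ≠ ρ_j. Then a nonzero f ∈ K[x] is stable for this family — i.e., there exists i ∈ A with ρ_j(f) = ρ_i(f) for all j > i — if and only if there exist i ∈ A and h ∈ K[x] with ρ_i(f·h − 1) > 0 (the latter condition expresses that the initial term in_{ρ_i} f is a unit in the graded algebra of ρ_i). -/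
/-!
If `ρ_i (f h - 1) > 0`, then `ρ_i (f h) = 0`, and the same holds for every `ρ_j` with `j > i`
because `ρ_j ≥ ρ_i`; since `ρ_j f + ρ_j h = ρ_i f + ρ_i h` with both summands nondecreasing in
the index, `ρ_j f = ρ_i f`.

Conversely, let `μ < ν` be two members of the family with `μ f = ν f`, and let `φ` be a
polynomial of minimal degree with `μ φ < ν φ`, so that `μ` and `ν` agree below `deg φ`. By
induction on the degree, every nonzero `r` with `μ r = ν r` has a unit initial form for `ν`.
Division with remainder, of `φ` by `r` when `deg r < deg φ` and of `r` by `φ` otherwise, gives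
a remainder `s` on which `μ` and `ν` agree and which is `ν`-equivalent to a multiple of `r`
(resp. to `r`); unit initial forms pass along such equivalences and to factors.
-/

open Polynomial

namespace AddValuation

section CommRing

variable {R Δ : Type*} [CommRing R] [AddCommGroup Δ] [LinearOrder Δ] [IsOrderedAddMonoid Δ]

/-- The initial form of `f` is a unit in the graded algebra of `ν`. -/
def IsInitialUnit (ν : AddValuation R (WithTop Δ)) (f : R) : Prop :=
  ∃ h : R, 0 < ν (f * h - 1)

theorem map_eq_zero_of_pos_map_sub_one (ν : AddValuation R (WithTop Δ)) {a : R}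
    (h : 0 < ν (a - 1)) : ν a = 0 := by
  simpa using ν.map_eq_of_lt_sub (x := 1) (y := a) (by simpa using h)

theorem lt_map_sub_of_map_eq (μ ν : AddValuation R (WithTop Δ)) {a b : R} (ha : μ a = ν a)
    (hb : μ b = ν b) (h : μ (a - b) < ν (a - b)) : ν b < ν (a - b) := by
  have hmin : min (ν a) (ν b) ≤ μ (a - b) := ha ▸ hb ▸ μ.map_sub a b
  have hba : ν b ≤ ν a := by
    by_contra! hab
    rw [min_eq_left hab.le, ← ν.map_sub_eq_of_lt_left hab] at hmin
    exact hmin.not_gt h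
  rw [min_eq_right hba] at hmin
  exact hmin.trans_lt h

namespace IsInitialUnit

variable {μ ν : AddValuation R (WithTop Δ)} {a b f : R}

theorem of_isUnit (hf : IsUnit f) : IsInitialUnit ν f :=
  ⟨↑hf.unit⁻¹, by simp⟩

theorem of_mul_left (hab : IsInitialUnit ν (a * b)) : IsInitialUnit ν a := by
  obtain ⟨h, hh⟩ := hab
  exact ⟨b * h, by rwa [← mul_assoc]⟩

theorem of_lt_map_sub (hb : IsInitialUnit ν b) (hab : ν b < ν (a - b)) : IsInitialUnit ν a := by
  obtain ⟨h, hh⟩ := hb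
  have hbh : ν b + ν h = 0 := by rw [← map_mul]; exact ν.map_eq_zero_of_pos_map_sub_one hh
  have hh_top : ν h ≠ ⊤ := fun htop => by simp [htop] at hbh
  have hpos : 0 < ν ((a - b) * h) := by
    rw [map_mul, ← hbh]
    exact WithTop.add_lt_add_right hh_top hab
  refine ⟨h, (lt_min hpos hh).trans_le ?_⟩
  have hsplit : a * h - 1 = (a - b) * h + (b * h - 1) := by ring
  exact hsplit ▸ ν.map_add _ _

theorem map_eq_of_le (hle : ∀ x, μ x ≤ ν x) (hf : IsInitialUnit μ f) : μ f = ν f := by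
  obtain ⟨h, hh⟩ := hf
  have hμ : μ f + μ h = 0 := by rw [← map_mul]; exact μ.map_eq_zero_of_pos_map_sub_one hh
  have hν : ν f + ν h = 0 := by
    rw [← map_mul]; exact ν.map_eq_zero_of_pos_map_sub_one (hh.trans_le (hle _))
  have hh_top : μ h ≠ ⊤ := fun htop => by simp [htop] at hμ
  refine (hle f).antisymm (not_lt.1 fun hlt => ?_)
  have hsum := WithTop.add_lt_add_of_lt_of_le hh_top hlt (hle h)
  rw [hμ, hν] at hsum
  exact lt_irrefl _ hsum

end IsInitialUnit

end CommRing

section Polynomial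

variable {K Δ : Type*} [Field K] [AddCommGroup Δ] [LinearOrder Δ] [IsOrderedAddMonoid Δ]
  {μ ν : AddValuation K[X] (WithTop Δ)}

theorem exists_map_lt_of_minimal_degree (hle : ∀ x, μ x ≤ ν x) (hne : μ ≠ ν) :
    ∃ g : K[X], μ g < ν g ∧ ∀ r : K[X], r.degree < g.degree → μ r = ν r := by
  have hex : ∃ g, μ g < ν g := by
    by_contra! h
    exact hne (AddValuation.ext fun p => (hle p).antisymm (h p))
  obtain ⟨g, hg, hmin⟩ := degree_lt_wf.has_min {g | μ g < ν g} hex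
  exact ⟨g, hg, fun r hr => (hle r).antisymm (not_lt.1 fun h => hmin r h hr)⟩

theorem isInitialUnit_of_degree_lt {g r : K[X]} (hg : μ g < ν g)
    (hmin : ∀ s : K[X], s.degree < g.degree → μ s = ν s) (hr0 : 0 < r.degree)
    (hrg : r.degree < g.degree) (hr : μ r = ν r)
    (ih : ∀ s : K[X], s.degree < r.degree → s ≠ 0 → μ s = ν s → IsInitialUnit ν s) :
    IsInitialUnit ν r := by
  have hg0 : g ≠ 0 := by rintro rfl; simp at hg
  have hdiv : r * (g / r) - -(g % r) = g := by
    linear_combination EuclideanDomain.div_add_mod g r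
  have hs : (-(g % r)).degree < r.degree := by
    rw [degree_neg]; exact degree_mod_lt g (ne_zero_of_degree_gt hr0)
  have hμs := hmin _ (hs.trans hrg)
  have hrt : μ (r * (g / r)) = ν (r * (g / r)) := by
    rw [map_mul, map_mul, hr, hmin _ (degree_div_lt hg0 hr0)]
  have hlt := lt_map_sub_of_map_eq μ ν hrt hμs (by rwa [hdiv])
  have hs0 : -(g % r) ≠ 0 := fun h => by simp [h] at hlt
  exact ((ih _ hs hs0 hμs).of_lt_map_sub hlt).of_mul_left

theorem isInitialUnit_of_degree_le (hμ : ∀ x, μ x = ⊤ → x = 0) (hle : ∀ x, μ x ≤ ν x)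
    {g r : K[X]} (hg : μ g < ν g) (hmin : ∀ s : K[X], s.degree < g.degree → μ s = ν s)
    (hgr : g.degree ≤ r.degree) (hr : μ r = ν r)
    (ih : ∀ s : K[X], s.degree < r.degree → s ≠ 0 → μ s = ν s → IsInitialUnit ν s) :
    IsInitialUnit ν r := by
  have hg0 : g ≠ 0 := by rintro rfl; simp at hg
  have hdiv : r - r % g = g * (r / g) := by
    linear_combination -EuclideanDomain.div_add_mod r g
  have hR : (r % g).degree < g.degree := degree_mod_lt r hg0
  have hq0 : r / g ≠ 0 := mt (Polynomial.div_eq_zero_iff hg0).1 hgr.not_gt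
  have hgq : μ (r - r % g) < ν (r - r % g) := by
    rw [hdiv, map_mul, map_mul]
    exact WithTop.add_lt_add_of_lt_of_le (mt (hμ _) hq0) hg (hle _)
  have hlt := lt_map_sub_of_map_eq μ ν hr (hmin _ hR) hgq
  have hR0 : r % g ≠ 0 := fun h => by simp [h] at hlt
  exact (ih _ (hR.trans_le hgr) hR0 (hmin _ hR)).of_lt_map_sub hlt

theorem isInitialUnit_of_map_eq (hμ : ∀ x, μ x = ⊤ → x = 0) (hle : ∀ x, μ x ≤ ν x)
    (hne : μ ≠ ν) {f : K[X]} (hf : f ≠ 0) (hfμν : μ f = ν f) : IsInitialUnit ν f := by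
  obtain ⟨g, hg, hmin⟩ := exists_map_lt_of_minimal_degree hle hne
  induction f using degree_lt_wf.induction with
  | _ r ih =>
    rcases le_or_gt r.degree 0 with hr0 | hr0
    · exact .of_isUnit (isUnit_iff_degree_eq_zero.2 (hr0.antisymm (zero_le_degree_iff.2 hf)))
    rcases lt_or_ge r.degree g.degree with hrg | hgr
    · exact isInitialUnit_of_degree_lt hg hmin hr0 hrg hfμν ih
    · exact isInitialUnit_of_degree_le hμ hle hg hmin hgr hfμν ih

end Polynomial

end AddValuation

open AddValuation in
theorem stable_iff_initial_term_unit_general {K : Type*} [Field K]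
    {Δ : Type*} [AddCommGroup Δ] [LinearOrder Δ] [IsOrderedAddMonoid Δ]
    {A : Type*} [LinearOrder A] (hA : ∀ i : A, ∃ j : A, i < j)
    (ρ : A → AddValuation (Polynomial K) (WithTop Δ))
    (hinf : ∀ (i : A) (f : Polynomial K), ρ i f = ⊤ → f = 0)
    (hmono : ∀ i j : A, i < j → (∀ f : Polynomial K, ρ i f ≤ ρ j f) ∧ ρ i ≠ ρ j)
    (f : Polynomial K) (hf : f ≠ 0) :
    (∃ i : A, ∀ j : A, i < j → ρ j f = ρ i f) ↔
      (∃ (i : A) (h : Polynomial K), 0 < ρ i (f * h - 1)) := by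
  constructor
  · rintro ⟨i, hstable⟩
    obtain ⟨j, hij⟩ := hA i
    obtain ⟨hle, hne⟩ := hmono i j hij
    exact ⟨j, isInitialUnit_of_map_eq (hinf i) hle hne hf (hstable j hij).symm⟩
  · rintro ⟨i, h, hpos⟩
    exact ⟨i, fun j hij => (IsInitialUnit.map_eq_of_le (hmono i j hij).1 ⟨h, hpos⟩).symm⟩

theorem stable_iff_initial_term_unit {K : Type*} [Field K]
    {Δ : Type*} [AddCommGroup Δ] [LinearOrder Δ] [IsOrderedAddMonoid Δ]
    {A : Type*} [LinearOrder A] (hA : ∀ i : A, ∃ j : A, i < j)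
    (v : AddValuation K (WithTop Δ))
    (ρ : A → AddValuation (Polynomial K) (WithTop Δ))
    (hres : ∀ (i : A) (c : K), ρ i (Polynomial.C c) = v c)
    (hinf : ∀ (i : A) (f : Polynomial K), ρ i f = ⊤ → f = 0)
    (hmono : ∀ i j : A, i < j → (∀ f : Polynomial K, ρ i f ≤ ρ j f) ∧ ρ i ≠ ρ j)
    (f : Polynomial K) (hf : f ≠ 0) :
    (∃ i : A, ∀ j : A, i < j → ρ j f = ρ i f) ↔
      (∃ (i : A) (h : Polynomial K), 0 < ρ i (f * h - 1)) :=
  stable_iff_initial_term_unit_general hA ρ hinf hmono f hf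
end

section
/- For all a, b ∈ L and δ, ε ∈ Γ, one has ω_{a,δ}(f) ≤ ω_{b,ε}(f) for every f ∈ L[x] if and only if w(a − b) ≥ δ and δ ≤ ε. -/
/-!
Necessity: testing on `f = x - a` gives `ω_{a,δ}(f) = δ` and `ω_{b,ε}(f) = min(w(b - a), ε)`.
Sufficiency: the `k`-th Taylor coefficient of `f` at `b` is `∑ᵢ C(i+k,k) aᵢ₊ₖ (b - a)ⁱ`
in terms of the coefficients `aⱼ` at `a`; when `w(b - a) ≥ δ` every summand has valuation at
least `w(aᵢ₊ₖ) + iδ`, so adding `kδ ≤ kε` bounds it below by `ω_{a,δ}(f)`.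
-/

/-- The depth-zero valuation `ω_{a,δ}` attached to `a ∈ L` and `δ ∈ Γ`. -/
noncomputable def omGen {L Γ : Type*} [Field L] [AddCommGroup Γ] [LinearOrder Γ] [IsOrderedAddMonoid Γ]
    (w : AddValuation L (WithTop Γ)) (a : L) (δ : Γ) (f : Polynomial L) : WithTop Γ :=
  (Finset.range (f.natDegree + 1)).inf
    fun ℓ => w ((Polynomial.taylor a f).coeff ℓ) + ((ℓ • δ : Γ) : WithTop Γ)

open Polynomial

namespace AddValuation

variable {R Γ : Type*} [Ring R] [AddCommGroup Γ] [LinearOrder Γ] [IsOrderedAddMonoid Γ]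

lemma map_natCast_nonneg (w : AddValuation R (WithTop Γ)) (n : ℕ) : 0 ≤ w (n : R) := by
  induction n with
  | zero => simp
  | succ n ih => exact Nat.cast_succ (R := R) n ▸ w.map_le_add ih w.map_one.ge

lemma le_map_sum_add {ι : Type*} (w : AddValuation R (WithTop Γ)) {s : Finset ι} {f : ι → R}
    {g c : WithTop Γ} (hf : ∀ i ∈ s, g ≤ w (f i) + c) : g ≤ w (∑ i ∈ s, f i) + c := by
  rcases s.eq_empty_or_nonempty with rfl | hs
  · simp
  obtain ⟨j, hj, hmin⟩ := s.exists_min_image (fun i => w (f i)) hs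
  exact (hf j hj).trans (add_le_add_left (w.map_le_sum hmin) c)

end AddValuation

section DepthZero

variable {L Γ : Type*} [Field L] [AddCommGroup Γ] [LinearOrder Γ] [IsOrderedAddMonoid Γ]
  (w : AddValuation L (WithTop Γ))

lemma omGen_le (a : L) (δ : Γ) (f : L[X]) (m : ℕ) :
    omGen w a δ f ≤ w ((taylor a f).coeff m) + ((m • δ : Γ) : WithTop Γ) := by
  rcases le_or_gt m f.natDegree with h | h
  · exact Finset.inf_le (Finset.mem_range.2 (Nat.lt_succ_of_le h))
  · rw [coeff_eq_zero_of_natDegree_lt (by rwa [natDegree_taylor]), w.map_zero, top_add]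
    exact le_top

lemma le_omGen_iff {a : L} {δ : Γ} {f : L[X]} {g : WithTop Γ} :
    g ≤ omGen w a δ f ↔ ∀ m : ℕ, g ≤ w ((taylor a f).coeff m) + ((m • δ : Γ) : WithTop Γ) :=
  ⟨fun h m => h.trans (omGen_le w a δ f m), fun h => Finset.le_inf fun m _ => h m⟩

lemma omGen_X_sub_C (a b : L) (δ : Γ) : omGen w a δ (X - C b) = min (w (a - b)) δ := by
  have htaylor : taylor a (X - C b) = X + C (a - b) := by
    rw [map_sub, taylor_X, taylor_C, map_sub, add_sub_assoc]
  rw [omGen, natDegree_X_sub_C, Finset.range_add_one, Finset.range_one, Finset.insert_eq,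
    Finset.inf_union, Finset.inf_singleton, Finset.inf_singleton, htaylor]
  simp [min_comm]

lemma omGen_le_taylor_coeff_add_nsmul {a b : L} {δ : Γ} (hab : (δ : WithTop Γ) ≤ w (a - b))
    (f : L[X]) (k : ℕ) :
    omGen w a δ f ≤ w ((taylor b f).coeff k) + ((k • δ : Γ) : WithTop Γ) := by
  rw [← sub_add_cancel b a, ← taylor_taylor, taylor_coeff, eval_eq_sum_range]
  refine w.le_map_sum_add fun i _ => ?_
  have hpow : ((i • δ : Γ) : WithTop Γ) ≤ w ((b - a) ^ i) := by
    rw [w.map_pow, WithTop.coe_nsmul, w.map_sub_swap]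
    exact nsmul_le_nsmul_right hab i
  calc omGen w a δ f
      ≤ w ((taylor a f).coeff (i + k)) + (((i + k) • δ : Γ) : WithTop Γ) := omGen_le w a δ f _
    _ = w ((taylor a f).coeff (i + k)) + ((i • δ : Γ) : WithTop Γ) + ((k • δ : Γ) : WithTop Γ) := by
        rw [add_nsmul, WithTop.coe_add, add_assoc]
    _ ≤ w ((i + k).choose k : L) + w ((taylor a f).coeff (i + k)) + w ((b - a) ^ i)
          + ((k • δ : Γ) : WithTop Γ) := by
        gcongr
        exact le_add_of_nonneg_left (w.map_natCast_nonneg _)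
    _ = w ((hasseDeriv k (taylor a f)).coeff i * (b - a) ^ i) + ((k • δ : Γ) : WithTop Γ) := by
        rw [hasseDeriv_coeff, w.map_mul, w.map_mul]

lemma omGen_le_omGen {a b : L} {δ ε : Γ} (hab : (δ : WithTop Γ) ≤ w (a - b)) (hδε : δ ≤ ε)
    (f : L[X]) : omGen w a δ f ≤ omGen w b ε f :=
  (le_omGen_iff w).2 fun k => (omGen_le_taylor_coeff_add_nsmul w hab f k).trans <|
    add_le_add_right (WithTop.coe_le_coe.2 (nsmul_le_nsmul_right hδε k)) _

end DepthZero

theorem depth_zero_le_iff_general {L Γ : Type*} [Field L] [AddCommGroup Γ] [LinearOrder Γ] [IsOrderedAddMonoid Γ]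
    (w : AddValuation L (WithTop Γ))
    (a b : L) (δ ε : Γ) :
    (∀ f : Polynomial L, omGen w a δ f ≤ omGen w b ε f) ↔
      (((δ : WithTop Γ) ≤ w (a - b)) ∧ δ ≤ ε) := by
  refine ⟨fun h => ?_, fun ⟨hab, hδε⟩ => omGen_le_omGen w hab hδε⟩
  have key := h (X - C a)
  rw [omGen_X_sub_C, omGen_X_sub_C, sub_self, w.map_zero, min_eq_right le_top, le_min_iff,
    w.map_sub_swap] at key
  exact ⟨key.1, WithTop.coe_le_coe.1 key.2⟩

theorem depth_zero_le_iff {L Γ : Type*} [Field L] [AddCommGroup Γ] [LinearOrder Γ] [IsOrderedAddMonoid Γ]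
    (w : AddValuation L (WithTop Γ)) (hw : ∀ x : L, w x = ⊤ → x = 0)
    (a b : L) (δ ε : Γ) :
    (∀ f : Polynomial L, omGen w a δ f ≤ omGen w b ε f) ↔
      (((δ : WithTop Γ) ≤ w (a - b)) ∧ δ ≤ ε) :=
  depth_zero_le_iff_general w a b δ ε
end

section
/- A polynomial g ∈ K[x] of degree ≥ 1 is μ-minimal if and only if μ computes g-adic expansions term-by-term: for every f ∈ K[x] and every expression f = Σ_ℓ a_ℓ·g^ℓ with polynomials a_ℓ ∈ K[x] of degree deg a_ℓ < deg g (all but finitely many zero), one has μ(f) = min_ℓ μ(a_ℓ·g^ℓ). -/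
/-! If `g` is `μ`-minimal and `deg f < deg g`, then `μ (f + q * g) = min (μ f) (μ (q * g))`: this
is automatic when the two values differ, and when they agree a strict inequality would be a
forbidden increase `μ f < μ (f - (-q) * g)`. Peeling the constant term off a `g`-adic expansion
`a₀ + g * (a₁ + a₂ g + ⋯)` and inducting gives the expansion formula. Conversely, expanding `q`
`g`-adically writes `f - q * g` as a `g`-adic expansion with constant term `f`, whose value is then
at most `μ f`. -/

/-- `g` is `μ`-minimal: for every nonzero `f ∈ K[x]` with `deg f < deg g` there is no
`q ∈ K[x]` with `μ(f - q·g) > μ(f)`. -/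
def MuMinimal {K Γ : Type*} [Field K] [AddCommGroup Γ] [LinearOrder Γ] [IsOrderedAddMonoid Γ]
    (μ : AddValuation (Polynomial K) (WithTop Γ)) (g : Polynomial K) : Prop :=
  ∀ f : Polynomial K, f ≠ 0 → f.degree < g.degree →
    ∀ q : Polynomial K, ¬ (μ f < μ (f - q * g))

open Polynomial Finset

theorem Finset.inf_range_succ' {α : Type*} [SemilatticeInf α] [OrderTop α] (f : ℕ → α) (n : ℕ) :
    (range (n + 1)).inf f = f 0 ⊓ (range n).inf fun ℓ => f (ℓ + 1) := by
  rw [range_add_one', inf_insert, inf_map]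
  rfl

theorem Finset.inf_add_const {ι Γ : Type*} [AddCommMonoid Γ] [LinearOrder Γ]
    [IsOrderedAddMonoid Γ] (s : Finset ι) (f : ι → WithTop Γ) (c : WithTop Γ) :
    s.inf f + c = s.inf fun i => f i + c :=
  apply_inf_eq_inf_comp_of_linearOrder (· + c) (fun _ _ h => add_le_add_left h c)
    (WithTop.top_add c)

theorem Finset.sum_range_succ_mul_pow {R : Type*} [CommSemiring R] (a : ℕ → R) (g : R) (n : ℕ) :
    ∑ ℓ ∈ range (n + 1), a ℓ * g ^ ℓ = a 0 + g * ∑ ℓ ∈ range n, a (ℓ + 1) * g ^ ℓ := by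
  rw [sum_range_succ', mul_sum, add_comm, pow_zero, mul_one]
  congr 1
  exact sum_congr rfl fun ℓ _ => by ring

theorem Polynomial.exists_eq_sum_mul_pow {K : Type*} [Field K] {g : K[X]} (hg : 0 < g.degree)
    (q : K[X]) : ∃ (N : ℕ) (b : ℕ → K[X]),
      (∀ ℓ, (b ℓ).degree < g.degree) ∧ q = ∑ ℓ ∈ range N, b ℓ * g ^ ℓ := by
  induction hn : q.natDegree using Nat.strong_induction_on generalizing q with
  | _ n ih =>
  by_cases hq : q.degree < g.degree
  · exact ⟨1, fun _ => q, fun _ => hq, by simp⟩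
  have hg0 : g ≠ 0 := ne_zero_of_degree_gt hg
  have hdiv0 : q / g ≠ 0 := by rwa [Ne, Polynomial.div_eq_zero_iff hg0]
  have hq0 : q ≠ 0 := by
    rintro rfl
    exact hq (by simpa using bot_lt_of_lt hg)
  obtain ⟨N, b, hb, hdiv⟩ :=
    ih _ (hn ▸ natDegree_lt_natDegree hdiv0 (degree_div_lt hq0 hg)) (q / g) rfl
  refine ⟨N + 1, fun ℓ => ℓ.casesOn (q % g) b, ?_, ?_⟩
  · rintro (_ | ℓ)
    exacts [degree_mod_lt q hg0, hb ℓ]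
  · rw [sum_range_succ_mul_pow, ← hdiv]
    exact (EuclideanDomain.mod_add_div q g).symm

section

variable {K Γ : Type*} [Field K] [AddCommGroup Γ] [LinearOrder Γ] [IsOrderedAddMonoid Γ]
  {μ : AddValuation K[X] (WithTop Γ)} {g : K[X]}

theorem MuMinimal.map_add_mul (hmin : MuMinimal μ g) {f : K[X]} (hf : f.degree < g.degree)
    (q : K[X]) : μ (f + q * g) = min (μ f) (μ (q * g)) := by
  by_cases hne : μ f = μ (q * g)
  · refine le_antisymm ?_ (μ.map_add _ _)
    rw [← hne, min_self]
    by_cases hf0 : f = 0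
    · simp_all
    · simpa [sub_eq_add_neg] using hmin f hf0 hf (-q)
  · exact μ.map_add_of_distinct_val hne

theorem MuMinimal.map_sum_mul_pow (hmin : MuMinimal μ g) {a : ℕ → K[X]}
    (ha : ∀ ℓ, (a ℓ).degree < g.degree) (N : ℕ) :
    μ (∑ ℓ ∈ range N, a ℓ * g ^ ℓ) = (range N).inf fun ℓ => μ (a ℓ * g ^ ℓ) := by
  induction N generalizing a with
  | zero => simp
  | succ N ih =>
    rw [sum_range_succ_mul_pow, mul_comm g, hmin.map_add_mul (ha 0), μ.map_mul,
      ih fun ℓ => ha (ℓ + 1), inf_add_const, inf_range_succ']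
    simp only [← μ.map_mul, pow_zero, mul_one, pow_succ, mul_assoc]

theorem muMinimal_of_map_sum_mul_pow
    (h : ∀ (N : ℕ) (a : ℕ → K[X]), (∀ ℓ, (a ℓ).degree < g.degree) →
      μ (∑ ℓ ∈ range N, a ℓ * g ^ ℓ) = (range N).inf fun ℓ => μ (a ℓ * g ^ ℓ)) :
    MuMinimal μ g := by
  intro f hf0 hf q hlt
  obtain ⟨N, b, hb, rfl⟩ := exists_eq_sum_mul_pow ((zero_le_degree_iff.mpr hf0).trans_lt hf) q
  let a : ℕ → K[X] := fun ℓ => ℓ.casesOn f fun ℓ => -b ℓ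
  have ha : ∀ ℓ, (a ℓ).degree < g.degree := by
    rintro (_ | ℓ)
    exacts [hf, (degree_neg _).trans_lt (hb ℓ)]
  have hexp : f - (∑ ℓ ∈ range N, b ℓ * g ^ ℓ) * g = ∑ ℓ ∈ range (N + 1), a ℓ * g ^ ℓ := by
    rw [sum_range_succ_mul_pow]
    simp only [a, Nat.rec_zero, neg_mul, sum_neg_distrib, mul_comm g, sub_eq_add_neg]
  rw [hexp, h _ a ha] at hlt
  exact (inf_le (f := fun ℓ => μ (a ℓ * g ^ ℓ)) (mem_range.mpr N.succ_pos)).not_gt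
    (by simpa [a] using hlt)

end

theorem muMinimal_iff_expansion_general {K Γ : Type*} [Field K] [AddCommGroup Γ] [LinearOrder Γ] [IsOrderedAddMonoid Γ]
    (μ : AddValuation (Polynomial K) (WithTop Γ))
    (g : Polynomial K) :
    MuMinimal μ g ↔
      ∀ (f : Polynomial K) (N : ℕ) (a : ℕ → Polynomial K),
        (∀ ℓ : ℕ, (a ℓ).degree < g.degree) →
        f = ∑ ℓ ∈ Finset.range N, a ℓ * g ^ ℓ →
        μ f = (Finset.range N).inf fun ℓ => μ (a ℓ * g ^ ℓ) :=
  ⟨fun hmin _ N _ ha hf => hf ▸ hmin.map_sum_mul_pow ha N,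
    fun h => muMinimal_of_map_sum_mul_pow fun N a ha => h _ N a ha rfl⟩

theorem muMinimal_iff_expansion {K Γ : Type*} [Field K] [AddCommGroup Γ] [LinearOrder Γ] [IsOrderedAddMonoid Γ]
    (μ : AddValuation (Polynomial K) (WithTop Γ))
    (hμ : ∀ f : Polynomial K, μ f = ⊤ → f = 0)
    (g : Polynomial K) (hg : 1 ≤ g.degree) :
    MuMinimal μ g ↔
      ∀ (f : Polynomial K) (N : ℕ) (a : ℕ → Polynomial K),
        (∀ ℓ : ℕ, (a ℓ).degree < g.degree) →
        f = ∑ ℓ ∈ Finset.range N, a ℓ * g ^ ℓ →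
        μ f = (Finset.range N).inf fun ℓ => μ (a ℓ * g ^ ℓ) :=
  muMinimal_iff_expansion_general μ g
end
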